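/- arXiv:math/9303204 — 2 statements merged into one kernel-verified Lean document; each statement's English description precedes it below -/
import Mathlib

section
/- If P: U → V is a bounded operator between Banach spaces with nonclosed image and F: U → V is a bounded finite rank operator, then P + F has nonclosed image. -/
open NormedSpace Metric ZeroAtInfty Filter Topology

noncomputable def dualSup {X : Type*} [NormedAddCommGroup X] [NormedSpace ℝ X]
    (M : Submodule ℝ (StrongDual ℝ X)) (x : X) : ℝ :=
  sSup {r : ℝ | ∃ f ∈ M, ‖f‖ ≤ 1 ∧ r = |f x|}

def IsTotalSub {X : Type*} [NormedAddCommGroup X] [NormedSpace ℝ X]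
    (M : Submodule ℝ (StrongDual ℝ X)) : Prop :=
  ∀ x : X, x ≠ 0 → ∃ f ∈ M, f x ≠ 0

def IsNormingOver {X : Type*} [NormedAddCommGroup X] [NormedSpace ℝ X]
    (M : Submodule ℝ (StrongDual ℝ X)) (L : Submodule ℝ X) : Prop :=
  ∃ c > 0, ∀ x ∈ L, c * ‖x‖ ≤ dualSup M x

def IsNorming {X : Type*} [NormedAddCommGroup X] [NormedSpace ℝ X]
    (M : Submodule ℝ (StrongDual ℝ X)) : Prop :=
  ∃ c > 0, ∀ x : X, c * ‖x‖ ≤ dualSup M x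

def NowhereNorming {X : Type*} [NormedAddCommGroup X] [NormedSpace ℝ X]
    (M : Submodule ℝ (StrongDual ℝ X)) : Prop :=
  ∀ L : Submodule ℝ X, IsClosed (L : Set X) → ¬FiniteDimensional ℝ L →
    ∀ c > 0, ∃ x ∈ L, dualSup M x < c * ‖x‖

def StrictlySingular {X Y : Type*} [NormedAddCommGroup X] [NormedSpace ℝ X]
    [NormedAddCommGroup Y] [NormedSpace ℝ Y] (T : X →L[ℝ] Y) : Prop :=
  ∀ L : Submodule ℝ X, IsClosed (L : Set X) → ¬FiniteDimensional ℝ L →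
    ¬∃ c > 0, ∀ x ∈ L, c * ‖x‖ ≤ ‖T x‖

def Nonquasireflexive (X : Type*) [NormedAddCommGroup X] [NormedSpace ℝ X] : Prop :=
  ¬FiniteDimensional ℝ
    (StrongDual ℝ (StrongDual ℝ X) ⧸ LinearMap.range (inclusionInDoubleDual ℝ X : X →ₗ[ℝ] StrongDual ℝ (StrongDual ℝ X)))

/-!
If `range (P + F)` were closed, so would be `range (P + F) ⊔ range F`, since `range F` is finite
dimensional. This subspace equals `range P ⊔ range F`, so `range P` would be an operator range
with a closed finite-dimensional extension `W`. Mapping `U × range F` onto `W` by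
`(u, e) ↦ P u + e`, which is a quotient map by the open mapping theorem, the preimage of
`range P` is `U × (range F ∩ range P)`, a closed set; hence `range P` would be closed.
-/

theorem LinearMap.range_add_sup_range_right {R M M₂ : Type*} [Ring R] [AddCommGroup M]
    [Module R M] [AddCommGroup M₂] [Module R M₂] (f g : M →ₗ[R] M₂) :
    range (f + g) ⊔ range g = range f ⊔ range g := by
  refine le_antisymm (sup_le (range_add_le f g) le_sup_right) (sup_le ?_ le_sup_right)
  calc range f = range ((f + g) + -g) := by rw [add_neg_cancel_right]
    _ ≤ range (f + g) ⊔ range (-g) := range_add_le _ _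
    _ = range (f + g) ⊔ range g := by rw [range_neg]

section OperatorRange

variable {𝕜 U V : Type*} [NontriviallyNormedField 𝕜] [CompleteSpace 𝕜]
  [NormedAddCommGroup U] [NormedSpace 𝕜 U] [CompleteSpace U]
  [NormedAddCommGroup V] [NormedSpace 𝕜 V] [CompleteSpace V]

theorem ContinuousLinearMap.isClosed_range_of_isClosed_sup_finiteDimensional
    (T : U →L[𝕜] V) (E : Submodule 𝕜 V) [FiniteDimensional 𝕜 E]
    (hclosed : IsClosed ((LinearMap.range (T : U →ₗ[𝕜] V) ⊔ E : Submodule 𝕜 V) : Set V)) :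
    IsClosed (Set.range T) := by
  set W := LinearMap.range (T : U →ₗ[𝕜] V) ⊔ E
  have : CompleteSpace W := hclosed.completeSpace_coe
  have : CompleteSpace E := FiniteDimensional.complete 𝕜 E
  let Φ : U × E →L[𝕜] W :=
    (T.comp (fst 𝕜 U E) + E.subtypeL.comp (snd 𝕜 U E)).codRestrict W
      fun x => Submodule.add_mem_sup (LinearMap.mem_range_self _ x.1) x.2.2
  have hΦ : Function.Surjective Φ := by
    rintro ⟨w, hw⟩
    obtain ⟨_, ⟨u, rfl⟩, e, he, rfl⟩ := Submodule.mem_sup.1 hw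
    exact ⟨(u, ⟨e, he⟩), rfl⟩
  let S : Submodule 𝕜 W := (LinearMap.range (T : U →ₗ[𝕜] V)).comap W.subtype
  have hpreimage : Φ ⁻¹' S = Prod.snd ⁻¹' ((LinearMap.range (T : U →ₗ[𝕜] V)).comap E.subtype) :=
    Set.ext fun x => Submodule.add_mem_iff_right _ (LinearMap.mem_range_self _ x.1)
  have hS : IsClosed (S : Set W) := by
    rw [← (Φ.isQuotientMap hΦ).isClosed_preimage, hpreimage]
    exact (Submodule.closed_of_finiteDimensional _).preimage continuous_snd
  have hrange : Set.range T = Subtype.val '' (S : Set W) := by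
    ext v
    refine ⟨?_, ?_⟩
    · rintro ⟨u, rfl⟩
      exact ⟨⟨T u, Submodule.mem_sup_left (LinearMap.mem_range_self _ u)⟩, ⟨u, rfl⟩, rfl⟩
    · rintro ⟨w, hw, rfl⟩
      exact hw
  rw [hrange]
  exact hclosed.isClosedEmbedding_subtypeVal.isClosedMap _ hS

end OperatorRange

theorem stmt10 {U V : Type*} [NormedAddCommGroup U] [NormedSpace ℝ U] [CompleteSpace U]
    [NormedAddCommGroup V] [NormedSpace ℝ V] [CompleteSpace V]
    (P : U →L[ℝ] V) (h : ¬IsClosed (Set.range P))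
    (F : U →L[ℝ] V) (hF : FiniteDimensional ℝ (LinearMap.range (F : U →ₗ[ℝ] V))) :
    ¬IsClosed (Set.range (P + F)) := by
  intro hclosed
  apply h
  refine P.isClosed_range_of_isClosed_sup_finiteDimensional (LinearMap.range (F : U →ₗ[ℝ] V)) ?_
  rw [← LinearMap.range_add_sup_range_right, ← ContinuousLinearMap.toLinearMap_add]
  rw [← ContinuousLinearMap.coe_coe, ← LinearMap.coe_range] at hclosed
  exact Submodule.isClosed_sup_finiteDimensional _ _ hclosed
end

section
/- Let X be a Banach space and M a total nonnorming subspace of X*. Then there exists an isomorphic embedding E: M → X* such that the strong (norm) closure of E*(X) in M* has infinite codimension and E*|_X − H is a nuclear operator, where H: X → M* is the natural evaluation map H(x)(m) = m(x). -/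
open NormedSpace Metric ZeroAtInfty Filter Topology

section basic
variable {X : Type*} [NormedAddCommGroup X] [NormedSpace ℝ X]
  (M : @Submodule ℝ (StrongDual ℝ X) _ NormedAddCommGroup.toSeminormedAddCommGroup.toAddCommGroup.toAddCommMonoid NormedSpace.toModule)

lemma dualSup_eq_norm (x : X) : dualSup M x = ‖(Submodule.subtypeL M).flip x‖ := by
  set H := (Submodule.subtypeL M).flip with hHdef
  have hHx : ∀ m : ↥M, H x m = (m : StrongDual ℝ X) x := fun m => rfl
  apply le_antisymm
  · apply csSup_le
    · exact ⟨0, ⟨0, M.zero_mem, by simp⟩⟩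
    · rintro r ⟨f, hfM, hf1, rfl⟩
      calc |f x| = |H x ⟨f, hfM⟩| := rfl
        _ ≤ ‖H x‖ * ‖(⟨f, hfM⟩ : ↥M)‖ := (H x).le_opNorm _
        _ ≤ ‖H x‖ * 1 := by
            have : 0 ≤ ‖H x‖ := norm_nonneg _
            exact mul_le_mul_of_nonneg_left hf1 this
        _ = ‖H x‖ := mul_one _
  · apply ContinuousLinearMap.opNorm_le_bound
    · apply Real.sSup_nonneg
      rintro r ⟨f, hfM, hf1, rfl⟩; positivity
    · intro m
      rcases eq_or_ne m 0 with rfl | hm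
      · simp
      · have hmn : 0 < ‖m‖ := norm_pos_iff.2 hm
        have hmem : (|((‖m‖⁻¹ • m : ↥M) : StrongDual ℝ X) x|) ∈
            {r : ℝ | ∃ f ∈ M, ‖f‖ ≤ 1 ∧ r = |f x|} := by
          refine ⟨((‖m‖⁻¹ • m : ↥M) : StrongDual ℝ X), SetLike.coe_mem _, ?_, rfl⟩
          rw [Submodule.coe_smul, norm_smul, norm_inv, norm_norm]
          rw [inv_mul_le_iff₀ hmn, mul_one]
          exact le_of_eq rfl
        have hb : BddAbove {r : ℝ | ∃ f ∈ M, ‖f‖ ≤ 1 ∧ r = |f x|} := by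
          refine ⟨‖x‖, ?_⟩
          rintro r ⟨f, hfM, hf1, rfl⟩
          calc |f x| ≤ ‖f‖ * ‖x‖ := f.le_opNorm x
            _ ≤ 1 * ‖x‖ := by nlinarith [norm_nonneg x]
            _ = ‖x‖ := one_mul _
        have := le_csSup hb hmem
        have heval : |((‖m‖⁻¹ • m : ↥M) : StrongDual ℝ X) x| = ‖m‖⁻¹ * |H x m| := by
          rw [Submodule.coe_smul]
          rw [ContinuousLinearMap.smul_apply, smul_eq_mul, abs_mul,
            abs_of_nonneg (inv_nonneg.2 (norm_nonneg m))]
          rfl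
        rw [heval] at this
        calc |H x m| = ‖m‖ * (‖m‖⁻¹ * |H x m|) := by
              rw [← mul_assoc, mul_inv_cancel₀ (ne_of_gt hmn), one_mul]
          _ ≤ ‖m‖ * dualSup M x := by
              exact mul_le_mul_of_nonneg_left this (norm_nonneg _)
          _ = dualSup M x * ‖m‖ := mul_comm _ _

end basic

section lemB
variable {Y W : Type*} [NormedAddCommGroup Y] [NormedSpace ℝ Y] [CompleteSpace Y]
  [NormedAddCommGroup W] [NormedSpace ℝ W]

lemma exists_far_point (T : Y →L[ℝ] W) (hinj : ∀ y, T y = 0 → y = 0)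
    (hnb : ∀ c, 0 < c → ∃ y, ‖T y‖ < c * ‖y‖) {γ : ℝ} (hγ : 0 < γ) :
    ∃ y : Y, ‖T y‖ < γ ∧ ∃ d, 0 < d ∧ ∀ u : Y, ‖u‖ ≤ 1 → d ≤ ‖T y - T u‖ := by
  by_contra hcon
  push_neg at hcon
  have h : ∀ y, ‖T y‖ < γ → ∀ d, 0 < d → ∃ u, ‖u‖ ≤ 1 ∧ ‖T y - T u‖ < d := hcon
  have key : ∀ y, ‖T y‖ < γ → ‖y‖ ≤ 2 := by
    intro y0 hy0
    have step : ∀ k : ℕ, ∀ y : Y, ‖T y‖ < γ * (1/2)^k →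
        ∃ y' : Y, ‖T y'‖ < γ * (1/2)^(k+1) ∧ ‖y - y'‖ ≤ (1/2)^k := by
      intro k y hy
      have h2k : ‖T ((2:ℝ)^k • y)‖ < γ := by
        rw [map_smul, norm_smul, norm_pow, Real.norm_ofNat]
        calc (2:ℝ)^k * ‖T y‖ < (2:ℝ)^k * (γ * (1/2)^k) := by
              apply mul_lt_mul_of_pos_left hy; positivity
          _ = γ := by rw [one_div, inv_pow]; field_simp
      obtain ⟨u, hu1, hud⟩ := h _ h2k (γ/2) (by positivity)
      refine ⟨y - (1/2:ℝ)^k • u, ?_, ?_⟩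
      · have heq : T (y - (1/2:ℝ)^k • u) = (1/2:ℝ)^k • (T ((2:ℝ)^k • y) - T u) := by
          rw [map_sub, map_smul, map_smul, smul_sub, smul_smul]
          rw [one_div, inv_pow, inv_mul_cancel₀ (by positivity : ((2:ℝ)^k) ≠ 0), one_smul]
        rw [heq, norm_smul, norm_pow, show ‖(1/2:ℝ)‖ = 1/2 by rw [Real.norm_eq_abs]; norm_num]
        calc (1/2:ℝ)^k * ‖T ((2:ℝ)^k • y) - T u‖ < (1/2:ℝ)^k * (γ/2) := by
              apply mul_lt_mul_of_pos_left hud; positivity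
          _ = γ * (1/2)^(k+1) := by ring
      · rw [sub_sub_cancel, norm_smul, norm_pow, show ‖(1/2:ℝ)‖ = 1/2 by rw [Real.norm_eq_abs]; norm_num]
        calc (1/2:ℝ)^k * ‖u‖ ≤ (1/2:ℝ)^k * 1 := by
              apply mul_le_mul_of_nonneg_left hu1; positivity
          _ = (1/2:ℝ)^k := mul_one _
    choose F hF1 hF2 using step
    let a : (k : ℕ) → {y : Y // ‖T y‖ < γ * (1/2)^k} := fun k =>
      Nat.rec ⟨y0, by simpa using hy0⟩ (fun k p => ⟨F k p.1 p.2, hF1 k p.1 p.2⟩) k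
    have hstepdist : ∀ k, ‖(a k).1 - (a (k+1)).1‖ ≤ (1/2:ℝ)^k :=
      fun k => hF2 k (a k).1 (a k).2
    have hcauchy : CauchySeq (fun k => (a k).1) := by
      apply cauchySeq_of_le_geometric (1/2 : ℝ) 1 (by norm_num)
      intro n
      rw [dist_eq_norm, one_mul]
      exact hstepdist n
    obtain ⟨ℓ, hℓ⟩ := cauchySeq_tendsto_of_complete hcauchy
    have hTl : T ℓ = 0 := by
      have h1 : Tendsto (fun k => T (a k).1) atTop (nhds (T ℓ)) :=
        (T.continuous.tendsto ℓ).comp hℓ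
      have h2 : Tendsto (fun k => T (a k).1) atTop (nhds 0) := by
        apply squeeze_zero_norm (fun k => le_of_lt (a k).2)
        have : Tendsto (fun k => γ * (1/2:ℝ)^k) atTop (nhds (γ * 0)) :=
          (tendsto_pow_atTop_nhds_zero_of_lt_one (by norm_num) (by norm_num)).const_mul γ
        simpa using this
      exact tendsto_nhds_unique h1 h2
    have hl0 : ℓ = 0 := hinj ℓ hTl
    have hdist : ∀ K, ‖y0 - (a K).1‖ ≤ 2 := by
      have hsum : ∀ K, ‖y0 - (a K).1‖ ≤ ∑ k ∈ Finset.range K, (1/2:ℝ)^k := by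
        intro K
        induction K with
        | zero => simp [a]
        | succ K ih =>
            calc ‖y0 - (a (K+1)).1‖ ≤ ‖y0 - (a K).1‖ + ‖(a K).1 - (a (K+1)).1‖ := by
                  have : y0 - (a (K+1)).1 = (y0 - (a K).1) + ((a K).1 - (a (K+1)).1) := by abel
                  rw [this]; exact norm_add_le _ _
              _ ≤ (∑ k ∈ Finset.range K, (1/2:ℝ)^k) + (1/2:ℝ)^K :=
                  add_le_add ih (hstepdist K)
              _ = ∑ k ∈ Finset.range (K+1), (1/2:ℝ)^k := (Finset.sum_range_succ _ _).symm
      intro K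
      refine (hsum K).trans ?_
      have hs : Summable (fun k => (1/2:ℝ)^k) := summable_geometric_of_lt_one (by norm_num) (by norm_num)
      calc (∑ k ∈ Finset.range K, (1/2:ℝ)^k) ≤ ∑' k, (1/2:ℝ)^k := by
            apply Summable.sum_le_tsum _ (fun k _ => by positivity) hs
        _ = 2 := tsum_geometric_two
    have hfin : Tendsto (fun K => ‖y0 - (a K).1‖) atTop (nhds ‖y0‖) := by
      have : Tendsto (fun K => y0 - (a K).1) atTop (nhds (y0 - ℓ)) :=
        tendsto_const_nhds.sub hℓ
      rw [hl0, sub_zero] at this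
      exact this.norm
    exact le_of_tendsto hfin (Filter.Eventually.of_forall hdist)
  obtain ⟨w, hw⟩ := hnb (γ/3) (by positivity)
  have hw0 : w ≠ 0 := by
    rintro rfl
    rw [map_zero, norm_zero, norm_zero, mul_zero] at hw
    exact lt_irrefl 0 hw
  have hwn : 0 < ‖w‖ := norm_pos_iff.2 hw0
  set z := (3/‖w‖) • w with hz
  have hzn : ‖z‖ = 3 := by
    rw [hz, norm_smul, norm_div, Real.norm_ofNat, norm_norm, div_mul_cancel₀]
    exact ne_of_gt hwn
  have hTz : ‖T z‖ < γ := by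
    rw [hz, map_smul, norm_smul, norm_div, Real.norm_ofNat, norm_norm]
    calc 3/‖w‖ * ‖T w‖ < 3/‖w‖ * (γ/3 * ‖w‖) := by
          apply mul_lt_mul_of_pos_left hw; positivity
      _ = γ := by field_simp
  have := key z hTz
  rw [hzn] at this
  linarith

end lemB

section lemPhi
variable {Y W : Type*} [NormedAddCommGroup Y] [NormedSpace ℝ Y]
  [NormedAddCommGroup W] [NormedSpace ℝ W]

lemma exists_functional (T : Y →L[ℝ] W) (x₀ : Y) {d : ℝ} (hd : 0 < d)
    (hsep : ∀ u : Y, ‖u‖ ≤ 1 → d ≤ ‖T x₀ - T u‖) :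
    ∃ φ : Y →ₗ[ℝ] ℝ, φ x₀ = 1 ∧ (∀ z, |φ z| ≤ ‖z‖) ∧ (∀ z, |φ z| ≤ (1/d) * ‖T z‖) := by
  set S : Y → Set ℝ := fun z => {r | ∃ u v : Y, u + v = z ∧ r = ‖u‖ + (1/d) * ‖T v‖} with hS
  have hne : ∀ z, (S z).Nonempty := fun z => ⟨‖z‖ + (1/d) * ‖T 0‖, z, 0, add_zero z, rfl⟩
  have hnonneg : ∀ z, ∀ r ∈ S z, 0 ≤ r := by
    rintro z r ⟨u, v, huv, rfl⟩
    positivity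
  have hbd : ∀ z, BddBelow (S z) := fun z => ⟨0, hnonneg z⟩
  set q : Y → ℝ := fun z => sInf (S z) with hq
  have q_nonneg : ∀ z, 0 ≤ q z := fun z => le_csInf (hne z) (hnonneg z)
  have q_le_norm : ∀ z, q z ≤ ‖z‖ := by
    intro z
    have : ‖z‖ + (1/d) * ‖T 0‖ ∈ S z := ⟨z, 0, add_zero z, rfl⟩
    have h := csInf_le (hbd z) this
    simpa using h
  have q_le_T : ∀ z, q z ≤ (1/d) * ‖T z‖ := by
    intro z
    have : ‖(0:Y)‖ + (1/d) * ‖T z‖ ∈ S z := ⟨0, z, zero_add z, rfl⟩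
    have h := csInf_le (hbd z) this
    simpa using h
  have q_add : ∀ z₁ z₂, q (z₁ + z₂) ≤ q z₁ + q z₂ := by
    intro z₁ z₂
    have key : ∀ r₁ ∈ S z₁, ∀ r₂ ∈ S z₂, q (z₁ + z₂) ≤ r₁ + r₂ := by
      rintro r₁ ⟨u₁, v₁, huv₁, rfl⟩ r₂ ⟨u₂, v₂, huv₂, rfl⟩
      have hmem : ‖u₁ + u₂‖ + (1/d) * ‖T (v₁ + v₂)‖ ∈ S (z₁ + z₂) := by
        refine ⟨u₁ + u₂, v₁ + v₂, ?_, rfl⟩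
        rw [← huv₁, ← huv₂]; abel
      refine (csInf_le (hbd _) hmem).trans ?_
      have h1 : ‖u₁ + u₂‖ ≤ ‖u₁‖ + ‖u₂‖ := norm_add_le _ _
      have h2 : ‖T (v₁ + v₂)‖ ≤ ‖T v₁‖ + ‖T v₂‖ := by
        rw [map_add]; exact norm_add_le _ _
      have h3 : (1/d) * ‖T (v₁ + v₂)‖ ≤ (1/d) * (‖T v₁‖ + ‖T v₂‖) := by
        apply mul_le_mul_of_nonneg_left h2; positivity
      linarith
    have step1 : ∀ r₂ ∈ S z₂, q (z₁ + z₂) - r₂ ≤ q z₁ := by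
      intro r₂ hr₂
      apply le_csInf (hne z₁)
      intro r₁ hr₁
      linarith [key r₁ hr₁ r₂ hr₂]
    have step2 : q (z₁ + z₂) - q z₁ ≤ q z₂ := by
      apply le_csInf (hne z₂)
      intro r₂ hr₂
      linarith [step1 r₂ hr₂]
    linarith
  have q_smul : ∀ c : ℝ, 0 < c → ∀ z, q (c • z) = c * q z := by
    have forward : ∀ c : ℝ, 0 < c → ∀ z, q (c • z) ≤ c * q z := by
      intro c hc z
      have key : ∀ r ∈ S z, q (c • z) ≤ c * r := by
        rintro r ⟨u, v, huv, rfl⟩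
        have hmem : ‖c • u‖ + (1/d) * ‖T (c • v)‖ ∈ S (c • z) := by
          refine ⟨c • u, c • v, by rw [← smul_add, huv], rfl⟩
        refine (csInf_le (hbd _) hmem).trans ?_
        rw [norm_smul, map_smul, norm_smul, Real.norm_eq_abs, abs_of_pos hc]
        exact le_of_eq (by ring)
      have : ∀ r ∈ S z, c⁻¹ * q (c • z) ≤ r := by
        intro r hr
        rw [inv_mul_le_iff₀ hc]
        exact (key r hr).trans le_rfl
      have h2 : c⁻¹ * q (c • z) ≤ q z := le_csInf (hne z) this
      calc q (c • z) = c * (c⁻¹ * q (c • z)) := by field_simp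
        _ ≤ c * q z := mul_le_mul_of_nonneg_left h2 hc.le
    intro c hc z
    refine le_antisymm (forward c hc z) ?_
    have h := forward c⁻¹ (by positivity) (c • z)
    rw [smul_smul, inv_mul_cancel₀ (ne_of_gt hc), one_smul] at h
    calc c * q z ≤ c * (c⁻¹ * q (c • z)) := mul_le_mul_of_nonneg_left h hc.le
      _ = q (c • z) := by field_simp
  have q_neg : ∀ z, q (-z) = q z := by
    have forward : ∀ z, q (-z) ≤ q z := by
      intro z
      apply le_csInf (hne z)
      rintro r ⟨u, v, huv, rfl⟩
      have hmem : ‖-u‖ + (1/d) * ‖T (-v)‖ ∈ S (-z) := by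
        refine ⟨-u, -v, by rw [← neg_add, huv], rfl⟩
      refine (csInf_le (hbd _) hmem).trans ?_
      rw [norm_neg, map_neg, norm_neg]
    intro z
    refine le_antisymm (forward z) ?_
    have h := forward (-z)
    rwa [neg_neg] at h
  have q_zero : q 0 = 0 := le_antisymm (by simpa using q_le_norm 0) (q_nonneg 0)
  have one_le_qx₀ : 1 ≤ q x₀ := by
    apply le_csInf (hne x₀)
    rintro r ⟨u, v, huv, rfl⟩
    rcases le_or_gt 1 ‖u‖ with hu | hu
    · have : 0 ≤ (1/d) * ‖T v‖ := by positivity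
      linarith
    · have hTv : d ≤ ‖T v‖ := by
        have := hsep u hu.le
        have hveq : v = x₀ - u := by rw [← huv]; abel
        rw [hveq, map_sub]
        exact this
      have : (1:ℝ) ≤ (1/d) * ‖T v‖ := by
        rw [one_div]
        rw [le_inv_mul_iff₀ hd, mul_one]
        exact hTv
      linarith [norm_nonneg u]
  have hx₀ : x₀ ≠ 0 := by
    intro h0
    rw [h0, q_zero] at one_le_qx₀
    linarith
  -- the partial linear map on the span of x₀
  have hwd : ∀ c : ℝ, c • x₀ = 0 → c • (1:ℝ) = 0 := by
    intro c hc
    rcases smul_eq_zero.1 hc with rfl | h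
    · simp
    · exact absurd h hx₀
  set f := LinearPMap.mkSpanSingleton' (σ := RingHom.id ℝ) x₀ (1:ℝ) hwd with hf
  have hfq : ∀ p : f.domain, f p ≤ q p := by
    rintro ⟨p, hp⟩
    rw [LinearPMap.domain_mkSpanSingleton] at hp
    obtain ⟨c, rfl⟩ := Submodule.mem_span_singleton.1 hp
    have happ : f ⟨c • x₀, hp⟩ = c • (1:ℝ) := by
      apply LinearPMap.mkSpanSingleton'_apply
    rw [happ, smul_eq_mul, mul_one]
    rcases lt_trichotomy c 0 with hc | rfl | hc
    · have : q (c • x₀) = -c * q x₀ := by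
        have : c • x₀ = -((-c) • x₀) := by rw [neg_smul, neg_neg]
        rw [this, q_neg, q_smul (-c) (by linarith)]
      rw [this]
      nlinarith
    · exact q_nonneg _
    · rw [q_smul c hc]
      nlinarith
  obtain ⟨g, hg1, hg2⟩ := exists_extension_of_le_sublinear f q
    (fun c hc x => q_smul c hc x) q_add hfq
  have habs : ∀ z, |g z| ≤ q z := by
    intro z
    rw [abs_le]
    constructor
    · have := hg2 (-z)
      rw [map_neg, q_neg] at this
      linarith
    · exact hg2 z
  have hgx₀ : g x₀ = 1 := by
    have hmem : x₀ ∈ f.domain := by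
      rw [LinearPMap.domain_mkSpanSingleton]
      exact Submodule.mem_span_singleton_self x₀
    have := hg1 ⟨x₀, hmem⟩
    rw [LinearPMap.mkSpanSingleton'_apply_self] at this
    exact this
  exact ⟨g, hgx₀, fun z => (habs z).trans (q_le_norm z),
    fun z => (habs z).trans (q_le_T z)⟩

end lemPhi

section lemPsi
variable {Y W : Type*} [NormedAddCommGroup Y] [NormedSpace ℝ Y]
  [NormedAddCommGroup W] [NormedSpace ℝ W]

lemma exists_factor_functional (Hc : Y →L[ℝ] W) (g : Y →L[ℝ] ℝ) {C : ℝ} (hC0 : 0 ≤ C)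
    (hC : ∀ x, |g x| ≤ C * ‖Hc x‖) :
    ∃ Ψ : W →L[ℝ] ℝ, ∀ x, Ψ (Hc x) = g x := by
  set Hl := (Hc : Y →ₗ[ℝ] W) with hHl
  set gl := (g : Y →ₗ[ℝ] ℝ) with hgl
  have hker : LinearMap.ker Hl ≤ LinearMap.ker gl := by
    intro x hx
    rw [LinearMap.mem_ker] at hx ⊢
    have := hC x
    rw [show Hc x = Hl x from rfl, hx, norm_zero, mul_zero] at this
    have habs : |g x| = 0 := le_antisymm this (abs_nonneg _)
    exact abs_eq_zero.1 habs
  set gbar : (Y ⧸ LinearMap.ker Hl) →ₗ[ℝ] ℝ := (LinearMap.ker Hl).liftQ gl hker with hgbar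
  set fD : (LinearMap.range Hl) →ₗ[ℝ] ℝ := gbar ∘ₗ (Hl.quotKerEquivRange.symm : LinearMap.range Hl →ₗ[ℝ] (Y ⧸ LinearMap.ker Hl)) with hfD
  have hfD_apply : ∀ x : Y, ∀ h, fD ⟨Hl x, h⟩ = g x := by
    intro x h
    rw [hfD]
    simp only [LinearMap.coe_comp, Function.comp_apply, LinearEquiv.coe_coe]
    rw [Hl.quotKerEquivRange_symm_apply_image x h]
    rfl
  set f : W →ₗ.[ℝ] ℝ := ⟨LinearMap.range Hl, fD⟩ with hfdef
  have hdom : ∀ p : f.domain, f p ≤ C * ‖(p : W)‖ := by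
    rintro ⟨p, hp⟩
    obtain ⟨x, rfl⟩ := hp
    have : f ⟨Hl x, ⟨x, rfl⟩⟩ = g x := hfD_apply x _
    rw [this]
    exact (le_abs_self _).trans (hC x)
  obtain ⟨G, hG1, hG2⟩ := exists_extension_of_le_sublinear f (fun w => C * ‖w‖)
    (fun c hc x => by
      show C * ‖c • x‖ = c * (C * ‖x‖)
      rw [norm_smul, Real.norm_eq_abs, abs_of_pos hc]; ring)
    (fun x y => by
      show C * ‖x + y‖ ≤ C * ‖x‖ + C * ‖y‖
      nlinarith [norm_add_le x y])
    hdom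
  have habs : ∀ w, |G w| ≤ C * ‖w‖ := by
    intro w
    rw [abs_le]
    refine ⟨?_, hG2 w⟩
    have := hG2 (-w)
    rw [map_neg, norm_neg] at this
    linarith
  refine ⟨LinearMap.mkContinuous G C habs, ?_⟩
  intro x
  have hmem : Hl x ∈ f.domain := ⟨x, rfl⟩
  have h1 := hG1 ⟨Hl x, hmem⟩
  have h2 : f ⟨Hl x, hmem⟩ = g x := hfD_apply x hmem
  show G (Hl x) = g x
  rw [← h2]
  exact h1

end lemPsi

section stepsec
variable {X W : Type*} [NormedAddCommGroup X] [NormedSpace ℝ X] [CompleteSpace X]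
  [NormedAddCommGroup W] [NormedSpace ℝ W]

set_option maxHeartbeats 1600000 in
lemma step_lemma (H : X →L[ℝ] W) (hinj : ∀ x, H x = 0 → x = 0)
    (hnb : ∀ c, 0 < c → ∃ w, ‖H w‖ < c * ‖w‖)
    (n : ℕ) (x : ℕ → X) (g : ℕ → (X →L[ℝ] ℝ)) (C : ℕ → ℝ)
    (hbio : ∀ i < n, ∀ j, j < n → g i (x j) = if i = j then 1 else 0)
    (hdom : ∀ i < n, ∀ z, |g i z| ≤ C i * ‖H z‖) :
    ∃ (xn : X) (gn : X →L[ℝ] ℝ) (Cn : ℝ),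
      gn xn = 1 ∧ (∀ j < n, gn (x j) = 0) ∧ (∀ j < n, g j xn = 0) ∧
      (∀ z, |gn z| ≤ Cn * ‖H z‖) ∧ 0 ≤ Cn ∧
      ‖H xn‖ * ‖gn‖ ≤ (1/2)^n * (1/4) := by
  classical
  set Sg : ℝ := ∑ j ∈ Finset.range n, ‖g j‖ * ‖x j‖ with hSg
  set SH : ℝ := ∑ j ∈ Finset.range n, C j * ‖H (x j)‖ with hSH
  set SCx : ℝ := ∑ j ∈ Finset.range n, C j * ‖x j‖ with hSCx
  have hC0 : ∀ i < n, 0 ≤ C i := by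
    intro i hi
    have := hdom i hi
    by_contra hneg
    push_neg at hneg
    -- C i < 0; then for any z with H z ≠ 0 we get contradiction; use z with ‖H z‖ > 0
    obtain ⟨w, hw⟩ := hnb 1 one_pos
    have hw0 : w ≠ 0 := by
      intro h0; rw [h0] at hw; simp at hw
    rcases eq_or_ne (H w) 0 with hHw | hHw
    · exact hw0 (hinj w hHw)
    · have h1 := this w
      have h2 : C i * ‖H w‖ < 0 := mul_neg_of_neg_of_pos hneg (norm_pos_iff.2 hHw)
      linarith [abs_nonneg (g i w)]
  have hSg0 : 0 ≤ Sg := Finset.sum_nonneg (fun j _ => by positivity)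
  have hSH0 : 0 ≤ SH := Finset.sum_nonneg (fun j hj =>
    mul_nonneg (hC0 j (Finset.mem_range.1 hj)) (norm_nonneg _))
  have hSCx0 : 0 ≤ SCx := Finset.sum_nonneg (fun j hj =>
    mul_nonneg (hC0 j (Finset.mem_range.1 hj)) (norm_nonneg _))
  set P : X →L[ℝ] X :=
    ContinuousLinearMap.id ℝ X - ∑ j ∈ Finset.range n, (g j).smulRight (x j) with hP
  have hPapply : ∀ z, P z = z - ∑ j ∈ Finset.range n, g j z • x j := by
    intro z
    rw [hP, ContinuousLinearMap.sub_apply, ContinuousLinearMap.id_apply,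
      ContinuousLinearMap.sum_apply]
    congr 1
  have hgP : ∀ z, ∀ i, i < n → g i (P z) = 0 := by
    intro z i hi
    rw [hPapply, map_sub, map_sum]
    have : ∀ j ∈ Finset.range n, g i (g j z • x j) = g j z * g i (x j) := by
      intro j _; rw [map_smul]; rfl
    rw [Finset.sum_congr rfl this]
    have hsum : ∑ j ∈ Finset.range n, g j z * g i (x j) = g i z := by
      rw [Finset.sum_eq_single_of_mem i (Finset.mem_range.2 hi)]
      · rw [hbio i hi i hi, if_pos rfl, mul_one]
      · intro j hj hji
        rw [hbio i hi j (Finset.mem_range.1 hj), if_neg (Ne.symm hji), mul_zero]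
    rw [hsum]
    ring
  have hPx : ∀ j, j < n → P (x j) = 0 := by
    intro j hj
    rw [hPapply]
    have hsum : ∑ i ∈ Finset.range n, g i (x j) • x i = x j := by
      rw [Finset.sum_eq_single_of_mem j (Finset.mem_range.2 hj)]
      · rw [hbio j hj j hj, if_pos rfl, one_smul]
      · intro i hi hij
        rw [hbio i (Finset.mem_range.1 hi) j hj, if_neg hij, zero_smul]
    rw [hsum, sub_self]
  have hPfix : ∀ z, (∀ j, j < n → g j z = 0) → P z = z := by
    intro z hz
    rw [hPapply]
    have hsum : ∑ j ∈ Finset.range n, g j z • x j = 0 := by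
      apply Finset.sum_eq_zero
      intro j hj
      rw [hz j (Finset.mem_range.1 hj), zero_smul]
    rw [hsum, sub_zero]
  have hHP : ∀ z, ‖H (P z)‖ ≤ (1 + SH) * ‖H z‖ := by
    intro z
    rw [hPapply, map_sub, map_sum]
    calc ‖H z - ∑ j ∈ Finset.range n, H (g j z • x j)‖
        ≤ ‖H z‖ + ‖∑ j ∈ Finset.range n, H (g j z • x j)‖ := norm_sub_le _ _
      _ ≤ ‖H z‖ + ∑ j ∈ Finset.range n, ‖H (g j z • x j)‖ :=
          add_le_add_right (norm_sum_le _ _) _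
      _ ≤ ‖H z‖ + ∑ j ∈ Finset.range n, C j * ‖H (x j)‖ * ‖H z‖ := by
          apply add_le_add_right
          apply Finset.sum_le_sum
          intro j hj
          rw [map_smul, norm_smul, Real.norm_eq_abs]
          calc |g j z| * ‖H (x j)‖ ≤ (C j * ‖H z‖) * ‖H (x j)‖ :=
                mul_le_mul_of_nonneg_right (hdom j (Finset.mem_range.1 hj) z) (norm_nonneg _)
            _ = C j * ‖H (x j)‖ * ‖H z‖ := by ring
      _ = (1 + SH) * ‖H z‖ := by rw [← Finset.sum_mul]; ring
  have hPnorm : ∀ z, ‖P z‖ ≤ (1 + Sg) * ‖z‖ := by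
    intro z
    rw [hPapply]
    calc ‖z - ∑ j ∈ Finset.range n, g j z • x j‖
        ≤ ‖z‖ + ∑ j ∈ Finset.range n, ‖g j z • x j‖ :=
          (norm_sub_le _ _).trans (add_le_add_right (norm_sum_le _ _) _)
      _ ≤ ‖z‖ + ∑ j ∈ Finset.range n, ‖g j‖ * ‖x j‖ * ‖z‖ := by
          apply add_le_add_right
          apply Finset.sum_le_sum
          intro j hj
          rw [norm_smul, Real.norm_eq_abs]
          calc |g j z| * ‖x j‖ ≤ (‖g j‖ * ‖z‖) * ‖x j‖ :=
                mul_le_mul_of_nonneg_right ((g j).le_opNorm z) (norm_nonneg _)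
            _ = ‖g j‖ * ‖x j‖ * ‖z‖ := by ring
      _ = (1 + Sg) * ‖z‖ := by rw [← Finset.sum_mul]; ring
  -- the subspace F
  set F : Submodule ℝ X := ⨅ (j : Fin n), LinearMap.ker ((g (j : ℕ)) : X →ₗ[ℝ] ℝ) with hF
  have hFmem : ∀ z, z ∈ F ↔ ∀ j, j < n → g j z = 0 := by
    intro z
    rw [hF, Submodule.mem_iInf]
    constructor
    · intro hz j hj
      exact hz ⟨j, hj⟩
    · intro hz j
      exact hz j j.2
  have hFclosed : IsClosed (F : Set X) := by
    have hco : (F : Set X) = ⋂ (j : Fin n), (LinearMap.ker ((g (j : ℕ)) : X →ₗ[ℝ] ℝ) : Set X) := by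
      rw [hF]
      simp [Submodule.coe_iInf]
    rw [hco]
    apply isClosed_iInter
    intro j
    have hks : ((LinearMap.ker ((g (j : ℕ)) : X →ₗ[ℝ] ℝ) : Submodule ℝ X) : Set X)
        = (g (j : ℕ)) ⁻¹' {0} := by
      ext z
      simp [LinearMap.mem_ker]
    rw [hks]
    exact isClosed_singleton.preimage (g (j : ℕ)).continuous
  haveI : CompleteSpace ↥F := hFclosed.completeSpace_coe
  set HF : ↥F →L[ℝ] W := H.comp F.subtypeL with hHF
  have hHFval : ∀ u : ↥F, HF u = H (u : X) := fun u => rfl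
  have hHFinj : ∀ u : ↥F, HF u = 0 → u = 0 := by
    intro u hu
    have := hinj (u : X) hu
    exact Subtype.ext this
  have hHFnb : ∀ c, 0 < c → ∃ u : ↥F, ‖HF u‖ < c * ‖u‖ := by
    intro c hc
    set η : ℝ := min (c / (2 * (1 + SH) + 1)) (1 / (2 * (SCx + 1))) with hη
    have hηpos : 0 < η := by
      apply lt_min
      · exact div_pos hc (by linarith)
      · exact div_pos one_pos (by linarith)
    obtain ⟨w, hw⟩ := hnb η hηpos
    have hw0 : w ≠ 0 := by
      intro h0; rw [h0] at hw; simp at hw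
    have hwn : 0 < ‖w‖ := norm_pos_iff.2 hw0
    have hPwF : P w ∈ F := (hFmem (P w)).2 (fun j hj => hgP w j hj)
    refine ⟨⟨P w, hPwF⟩, ?_⟩
    have hnorm_coe : ‖(⟨P w, hPwF⟩ : ↥F)‖ = ‖P w‖ := rfl
    have hsumb : ‖∑ j ∈ Finset.range n, g j w • x j‖ ≤ η * ‖w‖ * SCx := by
      calc ‖∑ j ∈ Finset.range n, g j w • x j‖ ≤ ∑ j ∈ Finset.range n, ‖g j w • x j‖ :=
            norm_sum_le _ _
        _ ≤ ∑ j ∈ Finset.range n, η * ‖w‖ * (C j * ‖x j‖) := by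
            apply Finset.sum_le_sum
            intro j hj
            rw [norm_smul, Real.norm_eq_abs]
            calc |g j w| * ‖x j‖ ≤ (C j * ‖H w‖) * ‖x j‖ :=
                  mul_le_mul_of_nonneg_right (hdom j (Finset.mem_range.1 hj) w) (norm_nonneg _)
              _ ≤ (C j * (η * ‖w‖)) * ‖x j‖ := by
                  apply mul_le_mul_of_nonneg_right _ (norm_nonneg _)
                  exact mul_le_mul_of_nonneg_left hw.le (hC0 j (Finset.mem_range.1 hj))
              _ = η * ‖w‖ * (C j * ‖x j‖) := by ring
        _ = η * ‖w‖ * SCx := by rw [← Finset.mul_sum]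
    have hPwlow : ‖P w‖ ≥ ‖w‖ / 2 := by
      rw [hPapply]
      have h1 : ‖w‖ - ‖∑ j ∈ Finset.range n, g j w • x j‖ ≤ ‖w - ∑ j ∈ Finset.range n, g j w • x j‖ := by
        have := norm_sub_norm_le w (∑ j ∈ Finset.range n, g j w • x j)
        linarith [this]
      have h2 : η * ‖w‖ * SCx ≤ ‖w‖ / 2 := by
        have hη2 : η ≤ 1 / (2 * (SCx + 1)) := min_le_right _ _
        have hb : η * SCx ≤ 1/2 := by
          have hb1 : η * SCx ≤ (1 / (2 * (SCx + 1))) * SCx :=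
            mul_le_mul_of_nonneg_right hη2 hSCx0
          have hb2 : (1 / (2 * (SCx + 1))) * SCx ≤ 1/2 := by
            rw [div_mul_eq_mul_div, one_mul,
              div_le_div_iff₀ (by linarith : (0:ℝ) < 2 * (SCx + 1)) (by norm_num : (0:ℝ) < 2)]
            nlinarith
          linarith
        calc η * ‖w‖ * SCx = (η * SCx) * ‖w‖ := by ring
          _ ≤ (1/2) * ‖w‖ := mul_le_mul_of_nonneg_right hb (norm_nonneg w)
          _ = ‖w‖/2 := by ring
      linarith
    have hHPw : ‖H (P w)‖ ≤ (1 + SH) * (η * ‖w‖) := by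
      calc ‖H (P w)‖ ≤ (1 + SH) * ‖H w‖ := hHP w
        _ ≤ (1 + SH) * (η * ‖w‖) := by
            apply mul_le_mul_of_nonneg_left hw.le (by linarith)
    rw [hHFval, hnorm_coe]
    have hη1 : η ≤ c / (2 * (1 + SH) + 1) := min_le_left _ _
    calc ‖H (P w)‖ ≤ (1 + SH) * (η * ‖w‖) := hHPw
      _ < c * (‖w‖ / 2) := by
          have : (1 + SH) * η < c / 2 := by
            calc (1 + SH) * η ≤ (1 + SH) * (c / (2 * (1 + SH) + 1)) :=
                  mul_le_mul_of_nonneg_left hη1 (by linarith)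
              _ < c / 2 := by
                  rw [mul_div_assoc']
                  rw [div_lt_div_iff₀ (by linarith : (0:ℝ) < 2 * (1 + SH) + 1)
                    (by norm_num : (0:ℝ) < 2)]
                  nlinarith [hc, hSH0]
          nlinarith [hwn]
      _ ≤ c * ‖P w‖ := by
          apply mul_le_mul_of_nonneg_left _ hc.le
          linarith [hPwlow]
  -- apply exists_far_point
  have hγpos : 0 < ((1:ℝ)/2)^n * (1/4) / (1 + Sg) :=
    div_pos (by positivity) (by linarith)
  obtain ⟨y, hy1, d, hd, hsep⟩ := exists_far_point HF hHFinj hHFnb hγpos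
  obtain ⟨φ, hφy, hφnorm, hφT⟩ := exists_functional HF y hd hsep
  set φc : ↥F →L[ℝ] ℝ := LinearMap.mkContinuous φ 1 (fun z => by
    rw [one_mul]; exact hφnorm z) with hφc
  have hφcval : ∀ u : ↥F, φc u = φ u := fun u => rfl
  set Pc : X →L[ℝ] ↥F := P.codRestrict F (fun z => (hFmem (P z)).2 (fun j hj => hgP z j hj))
    with hPc
  have hPcval : ∀ z, ((Pc z : ↥F) : X) = P z := fun z => rfl
  set gn : X →L[ℝ] ℝ := φc.comp Pc with hgn
  refine ⟨(y : X), gn, (1/d) * (1 + SH), ?_, ?_, ?_, ?_, ?_, ?_⟩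
  · -- gn y = 1
    have hyF : ∀ j, j < n → g j (y : X) = 0 := (hFmem (y : X)).1 y.2
    have hPy : P (y : X) = (y : X) := hPfix _ hyF
    have hPcy : Pc (y : X) = y := Subtype.ext (by rw [hPcval, hPy])
    rw [hgn]
    show φc (Pc (y : X)) = 1
    rw [hPcy, hφcval, hφy]
  · -- gn (x j) = 0
    intro j hj
    have hPxj : Pc (x j) = 0 := Subtype.ext (by rw [hPcval, hPx j hj]; rfl)
    show φc (Pc (x j)) = 0
    rw [hPxj, map_zero]
  · -- g j y = 0
    intro j hj
    exact (hFmem (y : X)).1 y.2 j hj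
  · -- domination
    intro z
    show |φc (Pc z)| ≤ (1/d) * (1 + SH) * ‖H z‖
    rw [hφcval]
    calc |φ (Pc z)| ≤ (1/d) * ‖HF (Pc z)‖ := hφT _
      _ = (1/d) * ‖H (P z)‖ := by rw [hHFval, hPcval]
      _ ≤ (1/d) * ((1 + SH) * ‖H z‖) := by
          apply mul_le_mul_of_nonneg_left (hHP z) (one_div_nonneg.2 hd.le)
      _ = (1/d) * (1 + SH) * ‖H z‖ := by ring
  · exact mul_nonneg (one_div_nonneg.2 hd.le) (by linarith)
  · -- cost
    have hgnnorm : ‖gn‖ ≤ 1 + Sg := by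
      apply ContinuousLinearMap.opNorm_le_bound _ (by linarith)
      intro z
      show ‖φc (Pc z)‖ ≤ (1 + Sg) * ‖z‖
      rw [hφcval, Real.norm_eq_abs]
      calc |φ (Pc z)| ≤ ‖Pc z‖ := hφnorm _
        _ = ‖P z‖ := rfl
        _ ≤ (1 + Sg) * ‖z‖ := hPnorm z
    have hHy : ‖H (y : X)‖ < ((1:ℝ)/2)^n * (1/4) / (1 + Sg) := by
      rw [← hHFval]; exact hy1
    have h1 : 0 ≤ ‖H (y : X)‖ := norm_nonneg _
    calc ‖H (y : X)‖ * ‖gn‖ ≤ (((1:ℝ)/2)^n * (1/4) / (1 + Sg)) * (1 + Sg) := by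
          apply mul_le_mul hHy.le hgnnorm (norm_nonneg _)
            (le_of_lt hγpos)
      _ = ((1:ℝ)/2)^n * (1/4) := div_mul_cancel₀ _ (by linarith)
  
end stepsec

section chain
variable {X W : Type*} [NormedAddCommGroup X] [NormedSpace ℝ X] [CompleteSpace X]
  [NormedAddCommGroup W] [NormedSpace ℝ W]

set_option maxHeartbeats 1600000 in
lemma exists_system (H : X →L[ℝ] W) (hinj : ∀ x, H x = 0 → x = 0)
    (hnb : ∀ c, 0 < c → ∃ w, ‖H w‖ < c * ‖w‖) :
    ∃ (x : ℕ → X) (g : ℕ → (X →L[ℝ] ℝ)) (C : ℕ → ℝ),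
      (∀ i j, g i (x j) = if i = j then 1 else 0) ∧
      (∀ i, ∀ z, |g i z| ≤ C i * ‖H z‖) ∧
      (∀ i, ‖H (x i)‖ * ‖g i‖ ≤ (1/2:ℝ)^i * (1/4)) := by
  classical
  set Good : ℕ → (ℕ → X) → (ℕ → (X →L[ℝ] ℝ)) → (ℕ → ℝ) → Prop := fun n x g C =>
    (∀ i, i < n → ∀ j, j < n → g i (x j) = if i = j then 1 else 0) ∧
    (∀ i, i < n → ∀ z, |g i z| ≤ C i * ‖H z‖) ∧
    (∀ i, i < n → ‖H (x i)‖ * ‖g i‖ ≤ (1/2:ℝ)^i * (1/4)) with hGoodDef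
  have hstep : ∀ n x g C, Good n x g C → ∃ x' g' C',
      (∀ k, k ≠ n → x' k = x k ∧ g' k = g k ∧ C' k = C k) ∧ Good (n+1) x' g' C' := by
    intro n x g C hG
    obtain ⟨hbio, hdom, hcost⟩ := hG
    obtain ⟨xn, gn, Cn, h1, h2, h3, h4, h5, h6⟩ :=
      step_lemma H hinj hnb n x g C (fun i hi j hj => hbio i hi j hj)
        (fun i hi z => hdom i hi z)
    refine ⟨Function.update x n xn, Function.update g n gn, Function.update C n Cn,
      fun k hk => ⟨Function.update_of_ne hk _ _, Function.update_of_ne hk _ _,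
        Function.update_of_ne hk _ _⟩, ?_, ?_, ?_⟩
    · intro i hi j hj
      rcases eq_or_lt_of_le (Nat.lt_succ_iff.1 hi) with hieq | hilt
      · subst hieq
        rw [Function.update_self]
        rcases eq_or_lt_of_le (Nat.lt_succ_iff.1 hj) with hjeq | hjlt
        · subst hjeq
          rw [Function.update_self, if_pos rfl]
          exact h1
        · have hjn : j ≠ i := Nat.ne_of_lt hjlt
          rw [Function.update_of_ne hjn, if_neg (Ne.symm hjn)]
          exact h2 j hjlt
      · have hin : i ≠ n := Nat.ne_of_lt hilt
        rw [Function.update_of_ne hin]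
        rcases eq_or_lt_of_le (Nat.lt_succ_iff.1 hj) with hjeq | hjlt
        · subst hjeq
          rw [Function.update_self, if_neg (by omega : ¬ i = j)]
          exact h3 i hilt
        · have hjn : j ≠ n := Nat.ne_of_lt hjlt
          rw [Function.update_of_ne hjn]
          exact hbio i hilt j hjlt
    · intro i hi z
      rcases eq_or_lt_of_le (Nat.lt_succ_iff.1 hi) with hieq | hilt
      · subst hieq
        rw [Function.update_self, Function.update_self]
        exact h4 z
      · have hin : i ≠ n := Nat.ne_of_lt hilt
        rw [Function.update_of_ne hin, Function.update_of_ne hin]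
        exact hdom i hilt z
    · intro i hi
      rcases eq_or_lt_of_le (Nat.lt_succ_iff.1 hi) with hieq | hilt
      · subst hieq
        rw [Function.update_self, Function.update_self]
        exact h6
      · have hin : i ≠ n := Nat.ne_of_lt hilt
        rw [Function.update_of_ne hin, Function.update_of_ne hin]
        exact hcost i hilt
  choose xs gs Cs hkeep hG using hstep
  have base : Good 0 (fun _ => 0) (fun _ => 0) (fun _ => 0) := by
    refine ⟨?_, ?_, ?_⟩ <;> intro i hi <;> omega
  let rec0 : (n : ℕ) →
      {t : (ℕ → X) × (ℕ → (X →L[ℝ] ℝ)) × (ℕ → ℝ) // Good n t.1 t.2.1 t.2.2} := fun n =>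
    Nat.rec (motive := fun n =>
        {t : (ℕ → X) × (ℕ → (X →L[ℝ] ℝ)) × (ℕ → ℝ) // Good n t.1 t.2.1 t.2.2})
      ⟨⟨fun _ => 0, fun _ => 0, fun _ => 0⟩, base⟩
      (fun n p => ⟨⟨xs n p.1.1 p.1.2.1 p.1.2.2 p.2,
                    gs n p.1.1 p.1.2.1 p.1.2.2 p.2,
                    Cs n p.1.1 p.1.2.1 p.1.2.2 p.2⟩,
                   hG n p.1.1 p.1.2.1 p.1.2.2 p.2⟩) n
  have hrec_succ : ∀ n k, k ≠ n →
      (rec0 (n+1)).1.1 k = (rec0 n).1.1 k ∧ (rec0 (n+1)).1.2.1 k = (rec0 n).1.2.1 k ∧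
      (rec0 (n+1)).1.2.2 k = (rec0 n).1.2.2 k := by
    intro n k hk
    exact hkeep n (rec0 n).1.1 (rec0 n).1.2.1 (rec0 n).1.2.2 (rec0 n).2 k hk
  set xf : ℕ → X := fun k => (rec0 (k+1)).1.1 k with hxf
  set gf : ℕ → (X →L[ℝ] ℝ) := fun k => (rec0 (k+1)).1.2.1 k with hgf
  set Cf : ℕ → ℝ := fun k => (rec0 (k+1)).1.2.2 k with hCf
  have hcoh : ∀ n k, k < n → (rec0 n).1.1 k = xf k ∧ (rec0 n).1.2.1 k = gf k ∧
      (rec0 n).1.2.2 k = Cf k := by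
    intro n
    induction n with
    | zero => intro k hk; omega
    | succ n ih =>
        intro k hk
        rcases Nat.lt_succ_iff_lt_or_eq.1 hk with hlt | heq
        · have h := hrec_succ n k (Nat.ne_of_lt hlt)
          have h2 := ih k hlt
          exact ⟨h.1.trans h2.1, h.2.1.trans h2.2.1, h.2.2.trans h2.2.2⟩
        · subst heq
          exact ⟨rfl, rfl, rfl⟩
  refine ⟨xf, gf, Cf, ?_, ?_, ?_⟩
  · intro i j
    set N := max i j + 1 with hN
    have hiN : i < N := by omega
    have hjN : j < N := by omega
    have h := (rec0 N).2.1 i hiN j hjN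
    rw [(hcoh N i hiN).2.1, (hcoh N j hjN).1] at h
    exact h
  · intro i z
    set N := i + 1 with hN
    have hiN : i < N := by omega
    have h := (rec0 N).2.2.1 i hiN z
    rw [(hcoh N i hiN).2.1, (hcoh N i hiN).2.2] at h
    exact h
  · intro i
    set N := i + 1 with hN
    have hiN : i < N := by omega
    have h := (rec0 N).2.2.2 i hiN
    rw [(hcoh N i hiN).2.1, (hcoh N i hiN).1] at h
    exact h

end chain

set_option maxHeartbeats 3000000 in
set_option synthInstance.maxHeartbeats 400000 in
theorem stmt12 {X : Type*} [NormedAddCommGroup X] [NormedSpace ℝ X] [CompleteSpace X]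
    (M : @Submodule ℝ (StrongDual ℝ X) _ NormedAddCommGroup.toSeminormedAddCommGroup.toAddCommGroup.toAddCommMonoid NormedSpace.toModule) (hMt : IsTotalSub M) (hMn : ¬IsNorming M) :
    ∃ E : ↥M →L[ℝ] StrongDual ℝ X,
      (∃ c > 0, ∀ m : ↥M, c * ‖m‖ ≤ ‖E m‖) ∧
      ¬FiniteDimensional ℝ
        (StrongDual ℝ ↥M ⧸ (LinearMap.range (E.flip : X →ₗ[ℝ] StrongDual ℝ ↥M)).topologicalClosure) ∧
      -- `E*|_X - H` is nuclear, where `H = (Submodule.subtypeL M).flip` is the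
      -- natural evaluation map `X → M*`, `H x m = m x`
      (∃ (g : ℕ → StrongDual ℝ X) (y : ℕ → StrongDual ℝ ↥M),
        Summable (fun n => ‖g n‖ * ‖y n‖) ∧
        ∀ x : X, E.flip x - (Submodule.subtypeL M).flip x = ∑' n, (g n x) • y n) := by
  classical
  letI i1 : NormedAddCommGroup (StrongDual ℝ ↥M) := ContinuousLinearMap.toNormedAddCommGroup
  letI i2 : @NormedSpace ℝ (StrongDual ℝ ↥M) _ i1.toSeminormedAddCommGroup := ContinuousLinearMap.toNormedSpace
  haveI i3 : NormSMulClass ℝ (StrongDual ℝ ↥M) := NormedSpace.toNormSMulClass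
  set H : X →L[ℝ] StrongDual ℝ ↥M := (Submodule.subtypeL M).flip with hH
  have hHapp : ∀ (z : X) (m : ↥M), H z m = (m : StrongDual ℝ X) z := fun _ _ => rfl
  have hinj : ∀ z, H z = 0 → z = 0 := by
    intro z hz
    by_contra h0
    obtain ⟨f, hfM, hfz⟩ := hMt z h0
    have h1 : H z ⟨f, hfM⟩ = 0 := by rw [hz]; rfl
    rw [hHapp] at h1
    exact hfz h1
  have hnb : ∀ c, 0 < c → ∃ w, ‖H w‖ < c * ‖w‖ := by
    intro c hc
    rw [IsNorming] at hMn
    push_neg at hMn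
    obtain ⟨w, hw⟩ := hMn c hc
    rw [dualSup_eq_norm] at hw
    exact ⟨w, hw⟩
  obtain ⟨x, g, C, hbio, hdomC, hcost⟩ := exists_system (X := X) (W := StrongDual ℝ ↥M) H hinj hnb
  -- summability facts
  have hgeo : Summable (fun n : ℕ => (1/2:ℝ)^n * (1/4)) :=
    (summable_geometric_of_lt_one (by norm_num) (by norm_num)).mul_right _
  have hsum : Summable (fun n => ‖H (x n)‖ * ‖g n‖) :=
    Summable.of_nonneg_of_le (fun n => by positivity) hcost hgeo
  have htsum_le : (∑' n, ‖H (x n)‖ * ‖g n‖) ≤ 1/2 := by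
    have h1 : (∑' n, ‖H (x n)‖ * ‖g n‖) ≤ ∑' n : ℕ, (1/2:ℝ)^n * (1/4) := Summable.tsum_le_tsum hcost hsum hgeo
    have h2 : (∑' n : ℕ, (1/2:ℝ)^n * (1/4)) = 1/2 := by
      rw [tsum_mul_right, tsum_geometric_two]; norm_num
    linarith
  have heval : ∀ (m : ↥M) n, |(m : StrongDual ℝ X) (x n)| ≤ ‖H (x n)‖ * ‖m‖ := by
    intro m n
    rw [← hHapp]
    have := (H (x n)).le_opNorm m
    rwa [Real.norm_eq_abs] at this
  have hnsX : ∀ (c : ℝ) (f : X →L[ℝ] ℝ), ‖c • f‖ = |c| * ‖f‖ := by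
    intro c f
    rw [← Real.norm_eq_abs]
    exact norm_smul (α := ℝ) (β := X →L[ℝ] ℝ) c f
  have hnsM : ∀ (c : ℝ) (f : StrongDual ℝ ↥M), ‖c • f‖ = |c| * ‖f‖ := by
    intro c f
    rw [← Real.norm_eq_abs]
    exact norm_smul (α := ℝ) (β := StrongDual ℝ ↥M) c f
  have hsummand : ∀ m : ↥M, Summable (fun n => ((m : StrongDual ℝ X) (x n)) • (g n)) := by
    intro m
    apply Summable.of_norm
    apply Summable.of_nonneg_of_le (fun n => norm_nonneg _) _ (hsum.mul_right ‖m‖)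
    intro n
    rw [hnsX]
    calc |(m : StrongDual ℝ X) (x n)| * ‖g n‖ ≤ (‖H (x n)‖ * ‖m‖) * ‖g n‖ :=
          mul_le_mul_of_nonneg_right (heval m n) (norm_nonneg _)
      _ = ‖H (x n)‖ * ‖g n‖ * ‖m‖ := by ring
  have hsummandnorm : ∀ m : ↥M, Summable (fun n => ‖((m : StrongDual ℝ X) (x n)) • (g n)‖) := by
    intro m
    apply Summable.of_nonneg_of_le (fun n => norm_nonneg _) _ (hsum.mul_right ‖m‖)
    intro n
    rw [hnsX]
    calc |(m : StrongDual ℝ X) (x n)| * ‖g n‖ ≤ (‖H (x n)‖ * ‖m‖) * ‖g n‖ :=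
          mul_le_mul_of_nonneg_right (heval m n) (norm_nonneg _)
      _ = ‖H (x n)‖ * ‖g n‖ * ‖m‖ := by ring
  set Slin : ↥M →ₗ[ℝ] StrongDual ℝ X :=
    { toFun := fun m => ∑' n, ((m : StrongDual ℝ X) (x n)) • (g n)
      map_add' := by
        intro m₁ m₂
        rw [← Summable.tsum_add (hsummand m₁) (hsummand m₂)]
        apply tsum_congr
        intro n
        have : ((↑(m₁ + m₂) : StrongDual ℝ X)) (x n) =
            (m₁ : StrongDual ℝ X) (x n) + (m₂ : StrongDual ℝ X) (x n) := by
          rw [Submodule.coe_add, ContinuousLinearMap.add_apply]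
        rw [this, add_smul]
      map_smul' := by
        intro c m
        rw [RingHom.id_apply, ← Summable.tsum_const_smul c (hsummand m)]
        apply tsum_congr
        intro n
        have : ((↑(c • m) : StrongDual ℝ X)) (x n) = c * ((m : StrongDual ℝ X) (x n)) := by
          rw [Submodule.coe_smul, ContinuousLinearMap.smul_apply, smul_eq_mul]
        rw [this, smul_smul] } with hSlin
  have hSlinbound : ∀ m : ↥M, ‖Slin m‖ ≤ (1/2) * ‖m‖ := by
    intro m
    have h1 : ‖Slin m‖ ≤ ∑' n, ‖((m : StrongDual ℝ X) (x n)) • (g n)‖ :=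
      norm_tsum_le_tsum_norm (hsummandnorm m)
    have h2 : (∑' n, ‖((m : StrongDual ℝ X) (x n)) • (g n)‖) ≤ ∑' n, ‖H (x n)‖ * ‖g n‖ * ‖m‖ := by
      apply Summable.tsum_le_tsum _ (hsummandnorm m) (hsum.mul_right ‖m‖)
      intro n
      rw [hnsX]
      calc |(m : StrongDual ℝ X) (x n)| * ‖g n‖ ≤ (‖H (x n)‖ * ‖m‖) * ‖g n‖ :=
            mul_le_mul_of_nonneg_right (heval m n) (norm_nonneg _)
        _ = ‖H (x n)‖ * ‖g n‖ * ‖m‖ := by ring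
    have h3 : (∑' n, ‖H (x n)‖ * ‖g n‖ * ‖m‖) = (∑' n, ‖H (x n)‖ * ‖g n‖) * ‖m‖ :=
      tsum_mul_right
    have h4 : (∑' n, ‖H (x n)‖ * ‖g n‖) * ‖m‖ ≤ (1/2) * ‖m‖ :=
      mul_le_mul_of_nonneg_right htsum_le (norm_nonneg _)
    linarith
  set Smap : ↥M →L[ℝ] StrongDual ℝ X := Slin.mkContinuous (1/2) hSlinbound with hSmap
  have hSmapval : ∀ m : ↥M, Smap m = ∑' n, ((m : StrongDual ℝ X) (x n)) • (g n) := fun m => rfl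
  set E : ↥M →L[ℝ] StrongDual ℝ X := M.subtypeL - Smap with hE
  have hEval : ∀ m : ↥M, E m = (m : StrongDual ℝ X) - Smap m := fun m => rfl
  have hsummableX : ∀ z : X, Summable (fun n => (g n z) • (H (x n))) := by
    intro z
    apply Summable.of_norm
    apply Summable.of_nonneg_of_le (fun n => norm_nonneg _) _ (hsum.mul_right ‖z‖)
    intro n
    refine (hnsM _ _).trans_le ?_
    calc |g n z| * ‖H (x n)‖ ≤ (‖g n‖ * ‖z‖) * ‖H (x n)‖ :=
          mul_le_mul_of_nonneg_right ((g n).le_opNorm z) (norm_nonneg _)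
      _ = ‖H (x n)‖ * ‖g n‖ * ‖z‖ := by ring
  have hflipval : ∀ (z : X) (m : ↥M), E.flip z m = E m z := fun z m => rfl
  have hEflip : ∀ z : X, E.flip z = H z - ∑' n, (g n z) • (H (x n)) := by
    intro z
    ext m
    rw [hflipval, hEval, ContinuousLinearMap.sub_apply, ContinuousLinearMap.sub_apply,
      hHapp]
    have hLHS : Smap m z = ∑' n, ((m : StrongDual ℝ X) (x n)) * (g n z) := by
      rw [hSmapval]
      calc (∑' n, ((m : StrongDual ℝ X) (x n)) • (g n)) z
          = (ContinuousLinearMap.apply ℝ ℝ z) (∑' n, ((m : StrongDual ℝ X) (x n)) • (g n)) := rfl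
        _ = ∑' n, (ContinuousLinearMap.apply ℝ ℝ z) (((m : StrongDual ℝ X) (x n)) • (g n)) :=
            (ContinuousLinearMap.apply ℝ ℝ z).map_tsum (hsummand m)
        _ = ∑' n, ((m : StrongDual ℝ X) (x n)) * (g n z) := tsum_congr (fun n => rfl)
    have hRHS : (∑' n, (g n z) • (H (x n))) m = ∑' n, (g n z) * ((m : StrongDual ℝ X) (x n)) := by
      calc (∑' n, (g n z) • (H (x n))) m
          = (ContinuousLinearMap.apply ℝ ℝ m) (∑' n, (g n z) • (H (x n))) := rfl
        _ = ∑' n, (ContinuousLinearMap.apply ℝ ℝ m) ((g n z) • (H (x n))) :=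
            (ContinuousLinearMap.apply ℝ ℝ m).map_tsum (hsummableX z)
        _ = ∑' n, (g n z) * ((m : StrongDual ℝ X) (x n)) := tsum_congr (fun n => rfl)
    rw [hLHS, hRHS]
    have hcomm : ∑' n, (g n z) * ((m : StrongDual ℝ X) (x n))
        = ∑' n, ((m : StrongDual ℝ X) (x n)) * (g n z) := by
      apply tsum_congr; intro n; ring
    rw [hcomm]
  refine ⟨E, ⟨1/2, by norm_num, ?_⟩, ?_, ?_⟩
  · -- embedding
    intro m
    have h1 : ‖E m‖ ≥ ‖(m : StrongDual ℝ X)‖ - ‖Smap m‖ := by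
      rw [hEval]
      exact norm_sub_norm_le _ _ |>.trans (le_of_eq rfl) |>.trans_eq rfl
    have h2 : ‖(m : StrongDual ℝ X)‖ = ‖m‖ := rfl
    have h3 := hSlinbound m
    have h4 : ‖Smap m‖ = ‖Slin m‖ := rfl
    linarith
  · -- infinite codimension
    -- the functionals Ψ n
    have hpsi : ∀ n : ℕ, ∃ Ψ : StrongDual ℝ ↥M →L[ℝ] ℝ, ∀ z, Ψ (H z) = g n z := by
      intro n
      apply exists_factor_functional (Y := X) (W := StrongDual ℝ ↥M) H (g n) (le_max_right (C n) 0)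
      intro z
      exact (hdomC n z).trans (mul_le_mul_of_nonneg_right (le_max_left _ _) (norm_nonneg _))
    choose Ψ hΨ using hpsi
    -- E.flip kills nothing... Ψ n annihilates range of E.flip
    have hkill : ∀ (n : ℕ) (z : X), Ψ n (E.flip z) = 0 := by
      intro n z
      rw [hEflip, map_sub, hΨ n z]
      have := (Ψ n).map_tsum (hsummableX z)
      rw [this]
      have hterm : ∀ j, Ψ n ((g j z) • (H (x j))) = (g j z) * (if n = j then 1 else 0) := by
        intro j
        rw [map_smul, smul_eq_mul, hΨ n (x j), hbio n j]
      rw [tsum_congr hterm]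
      rw [tsum_eq_single n (fun j hj => by rw [if_neg (Ne.symm hj), mul_zero])]
      rw [if_pos rfl, mul_one, sub_self]
    intro hFin
    set N := (LinearMap.range (E.flip : X →ₗ[ℝ] StrongDual ℝ ↥M)).topologicalClosure with hN
    have hNker : ∀ n : ℕ, N ≤ LinearMap.ker (Ψ n : StrongDual ℝ ↥M →ₗ[ℝ] ℝ) := by
      intro n
      apply Submodule.topologicalClosure_minimal
      · rintro w ⟨z, rfl⟩
        rw [LinearMap.mem_ker]
        exact hkill n z
      · exact ContinuousLinearMap.isClosed_ker (Ψ n)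
    set ψbar : ℕ → ((StrongDual ℝ ↥M ⧸ N) →ₗ[ℝ] ℝ) := fun n =>
      N.liftQ ((Ψ n : StrongDual ℝ ↥M →ₗ[ℝ] ℝ)) (hNker n) with hψbar
    have hψval : ∀ n j, ψbar n (Submodule.Quotient.mk (H (x j))) = if n = j then 1 else 0 := by
      intro n j
      rw [hψbar]
      rw [Submodule.liftQ_apply]
      have : (Ψ n : StrongDual ℝ ↥M →ₗ[ℝ] ℝ) (H (x j)) = Ψ n (H (x j)) := rfl
      rw [this, hΨ n (x j), hbio n j]
    have hli : LinearIndependent ℝ ψbar := by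
      rw [linearIndependent_iff']
      intro s f hzero i hi
      have := LinearMap.congr_fun hzero (Submodule.Quotient.mk (H (x i)))
      rw [LinearMap.zero_apply] at this
      rw [LinearMap.coe_sum, Finset.sum_apply] at this
      have hsimp : ∀ j ∈ s, (f j • ψbar j) (Submodule.Quotient.mk (H (x i))) =
          f j * (if j = i then 1 else 0) := by
        intro j _
        rw [LinearMap.smul_apply, hψval j i, smul_eq_mul]
      rw [Finset.sum_congr rfl hsimp, Finset.sum_eq_single_of_mem i hi
        (fun j _ hji => by rw [if_neg hji, mul_zero]), if_pos rfl, mul_one] at this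
      exact this
    haveI : FiniteDimensional ℝ (StrongDual ℝ ↥M ⧸ N) := hFin
    exact Module.Finite.not_linearIndependent_of_infinite ψbar hli
  · -- nuclear representation
    refine ⟨fun n => -(g n), fun n => H (x n), ?_, ?_⟩
    · have : (fun n => ‖-(g n)‖ * ‖H (x n)‖) = fun n => ‖H (x n)‖ * ‖g n‖ := by
        funext n
        rw [norm_neg, mul_comm]
      rw [this]
      exact hsum
    · intro z
      have h1 : E.flip z - (Submodule.subtypeL M).flip z = -(∑' n, (g n z) • (H (x n))) := by
        rw [← hH, hEflip z]
        abel
      rw [h1, ← tsum_neg]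
      apply tsum_congr
      intro n
      have h2 : ((-(g n) : X →L[ℝ] ℝ)) z = -((g n) z) := rfl
      rw [h2]
      exact (neg_smul ((g n) z) (H (x n))).symm
end
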